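/- An affine piecewise polynomial function of degree one on a complete regular SCR polyhedral complex Π induces a continuous piecewise affine function on N_ℝ, and conversely every piecewise affine function with respect to Π arises from a unique degree-one affine piecewise polynomial function; hence PP^1(Π) is isomorphic to the space of piecewise affine functions on Π. -/

import Mathlib

open scoped BigOperators

namespace PPArakelov

/-- Evaluation of a rational-coefficient multivariate polynomial at a real point. -/
noncomputable def evalR {m : ℕ} (p : MvPolynomial (Fin m) ℚ) (x : Fin m → ℝ) : ℝ :=
  MvPolynomial.eval x (MvPolynomial.map (algebraMap ℚ ℝ) p)

/-- Realization of an integral vector in `N_ℝ`. -/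
def ι {m : ℕ} (v : Fin m → ℤ) : Fin m → ℝ := fun i => (v i : ℝ)

/-- Realization of a rational vector in `N_ℝ`. -/
def ιQ {m : ℕ} (v : Fin m → ℚ) : Fin m → ℝ := fun i => (v i : ℝ)

/-- The convex cone generated by a finite set of vectors. -/
def coneOf {m : ℕ} (s : Finset (Fin m → ℝ)) : Set (Fin m → ℝ) :=
  { x | ∃ c : (Fin m → ℝ) → ℝ, (∀ v, 0 ≤ c v) ∧ x = ∑ v ∈ s, c v • v }

/-- A rational polyhedral cone: one generated by finitely many lattice vectors. -/
def IsRatCone {m : ℕ} (σ : Set (Fin m → ℝ)) : Prop :=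
  ∃ s : Finset (Fin m → ℤ), σ = coneOf (s.image ι)

/-- `τ` is a face of the cone `σ`. -/
def IsFaceOfCone {m : ℕ} (τ σ : Set (Fin m → ℝ)) : Prop :=
  ∃ u : (Fin m → ℝ) →ₗ[ℝ] ℝ, (∀ x ∈ σ, 0 ≤ u x) ∧ τ = {x ∈ σ | u x = 0}

/-- A rational polyhedral fan in `N_ℝ = ℝ^m`. -/
structure Fan (m : ℕ) where
  cones : Set (Set (Fin m → ℝ))
  finite : cones.Finite
  rat : ∀ σ ∈ cones, IsRatCone σ
  face_mem : ∀ σ ∈ cones, ∀ τ, IsFaceOfCone τ σ → τ ∈ cones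
  inter_face : ∀ σ ∈ cones, ∀ σ' ∈ cones,
    IsFaceOfCone (σ ∩ σ') σ ∧ IsFaceOfCone (σ ∩ σ') σ'

/-- The support `|Σ|` of a fan. -/
def Fan.supp {m : ℕ} (F : Fan m) : Set (Fin m → ℝ) := ⋃₀ F.cones

/-- A piecewise polynomial function on a fan (ambient version): on each cone it is
given by a polynomial with rational coefficients. -/
def PPfun {m : ℕ} (F : Fan m) (f : (Fin m → ℝ) → ℝ) : Prop :=
  ∀ σ ∈ F.cones, ∃ p : MvPolynomial (Fin m) ℚ, ∀ x ∈ σ, f x = evalR p x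

/-- A piecewise polynomial function defined on the support `|Σ|` of a fan. -/
def PPfunOn {m : ℕ} (F : Fan m) (f : ↥F.supp → ℝ) : Prop :=
  ∀ σ (hσ : σ ∈ F.cones), ∃ p : MvPolynomial (Fin m) ℚ,
    ∀ x (hx : x ∈ σ), f ⟨x, Set.mem_sUnion.mpr ⟨σ, hσ, hx⟩⟩ = evalR p x

/-- A homogeneous piecewise polynomial function of degree `k` on a fan. -/
def PPHomog {m : ℕ} (F : Fan m) (k : ℕ) (f : (Fin m → ℝ) → ℝ) : Prop :=
  ∀ σ ∈ F.cones, ∃ p : MvPolynomial (Fin m) ℚ, p.IsHomogeneous k ∧ ∀ x ∈ σ, f x = evalR p x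

/-- A piecewise linear function on a fan. -/
def IsPWLinear {m : ℕ} (F : Fan m) (f : (Fin m → ℝ) → ℝ) : Prop :=
  ∀ σ ∈ F.cones, ∃ ℓ : (Fin m → ℝ) →ₗ[ℝ] ℝ, ∀ x ∈ σ, f x = ℓ x

/-- A regular (smooth) fan: every cone is generated by part of a basis of the lattice. -/
def Fan.IsRegular {m : ℕ} (F : Fan m) : Prop :=
  ∀ σ ∈ F.cones, ∃ (b : Module.Basis (Fin m) ℤ (Fin m → ℤ)) (s : Finset (Fin m)),
    σ = coneOf (s.image fun j => ι (b j))

/-- A compatible tuple `(f_σ)_{σ ∈ Σ}` of polynomial functions on the cones of a fan: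
`f_τ = f_σ|_τ` whenever `τ` is a face of `σ`. -/
def CompatTuple {m : ℕ} (F : Fan m) (t : ∀ σ : F.cones, ↥(σ : Set (Fin m → ℝ)) → ℝ) : Prop :=
  (∀ σ : F.cones, ∃ p : MvPolynomial (Fin m) ℚ,
      ∀ x : ↥(σ : Set (Fin m → ℝ)), t σ x = evalR p (x : Fin m → ℝ)) ∧
  ∀ σ τ : F.cones, IsFaceOfCone (τ : Set (Fin m → ℝ)) (σ : Set (Fin m → ℝ)) →
    ∀ x (hx : x ∈ (τ : Set (Fin m → ℝ))) (hx' : x ∈ (σ : Set (Fin m → ℝ))),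
      t τ ⟨x, hx⟩ = t σ ⟨x, hx'⟩

/-- A rational polyhedron: convex hull of finitely many rational points plus a rational cone. -/
def polyhedronOf {m : ℕ} (V R : Finset (Fin m → ℚ)) : Set (Fin m → ℝ) :=
  { x | ∃ a c : (Fin m → ℚ) → ℝ,
      (∀ p, 0 ≤ a p) ∧ (∑ p ∈ V, a p = 1) ∧ (∀ v, 0 ≤ c v) ∧
      x = (∑ p ∈ V, a p • ιQ p) + ∑ v ∈ R, c v • ιQ v }

def IsRatPolyhedron {m : ℕ} (P : Set (Fin m → ℝ)) : Prop :=
  ∃ V R : Finset (Fin m → ℚ), V.Nonempty ∧ P = polyhedronOf V R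

/-- `Q` is a face of the polyhedron `P`. -/
def IsFaceOfPoly {m : ℕ} (Q P : Set (Fin m → ℝ)) : Prop :=
  ∃ (u : (Fin m → ℝ) →ₗ[ℝ] ℝ) (r : ℝ), (∀ x ∈ P, r ≤ u x) ∧ Q = {x ∈ P | u x = r}

/-- A (strongly convex) rational polyhedral complex in `N_ℝ = ℝ^m`. -/
structure PolyComplex (m : ℕ) where
  polys : Set (Set (Fin m → ℝ))
  finite : polys.Finite
  rat : ∀ P ∈ polys, IsRatPolyhedron P
  face_mem : ∀ P ∈ polys, ∀ Q, IsFaceOfPoly Q P → Q.Nonempty → Q ∈ polys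
  inter_face : ∀ P ∈ polys, ∀ P' ∈ polys, (P ∩ P').Nonempty →
    IsFaceOfPoly (P ∩ P') P ∧ IsFaceOfPoly (P ∩ P') P'

/-- A complete polyhedral complex covers all of `N_ℝ`. -/
def PolyComplex.IsComplete {m : ℕ} (C : PolyComplex m) : Prop := ⋃₀ C.polys = Set.univ

/-- The vertices `Π(0)` of a polyhedral complex. -/
def PolyComplex.vtx {m : ℕ} (C : PolyComplex m) : Set (Fin m → ℝ) :=
  {v | ({v} : Set (Fin m → ℝ)) ∈ C.polys}

/-- The cone of a polyhedron `P` at a point `v` (the cone of `P` in the star fan `Π(v)`). -/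
def coneAt {m : ℕ} (v : Fin m → ℝ) (P : Set (Fin m → ℝ)) : Set (Fin m → ℝ) :=
  {y | ∃ c : ℝ, 0 ≤ c ∧ ∃ x ∈ P, y = c • (x - v)}

/-- A piecewise polynomial function of degree `≤ k` on the star fan `Π(v)` at a vertex `v`. -/
def StarPP {m : ℕ} (C : PolyComplex m) (v : Fin m → ℝ) (k : ℕ)
    (f : (Fin m → ℝ) → ℝ) : Prop :=
  ∀ P ∈ C.polys, v ∈ P → ∃ p : MvPolynomial (Fin m) ℚ, p.totalDegree ≤ k ∧
    ∀ y ∈ coneAt v P, f y = evalR p y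

/-- A full-dimensional subset of `ℝ^m`. -/
def FullDim {m : ℕ} (P : Set (Fin m → ℝ)) : Prop := (interior P).Nonempty

/-- An affine piecewise polynomial function of degree `k` on a polyhedral complex:
a tuple `(f_v)` of piecewise polynomial functions on the star fans `Π(v)` such that on
every full-dimensional polyhedron `Λ` with vertices `v, v'`, the representing polynomials
agree: `f_{v,Λ} = f_{v',Λ}` as polynomial functions on `N_ℝ`. -/
def AffinePP {m : ℕ} (C : PolyComplex m) (k : ℕ)
    (f : (Fin m → ℝ) → ((Fin m → ℝ) → ℝ)) : Prop :=
  (∀ v ∈ C.vtx, StarPP C v k (f v)) ∧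
  ∀ Λ ∈ C.polys, FullDim Λ → ∀ v ∈ C.vtx, v ∈ Λ → ∀ v' ∈ C.vtx, v' ∈ Λ →
    ∀ p p' : MvPolynomial (Fin m) ℚ,
      p.totalDegree ≤ k → (∀ y ∈ coneAt v Λ, f v y = evalR p y) →
      p'.totalDegree ≤ k → (∀ y ∈ coneAt v' Λ, f v' y = evalR p' y) →
      ∀ x : Fin m → ℝ, evalR p (x - v) = evalR p' (x - v')

/-- `y` lies in the support of the star fan of `v`. -/
def InStar {m : ℕ} (C : PolyComplex m) (v y : Fin m → ℝ) : Prop :=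
  ∃ P ∈ C.polys, v ∈ P ∧ y ∈ coneAt v P

/-- A piecewise affine function with respect to the complex `C` (rational coefficients). -/
def IsPA {m : ℕ} (C : PolyComplex m) (g : (Fin m → ℝ) → ℝ) : Prop :=
  Continuous g ∧ ∀ Λ ∈ C.polys, ∃ p : MvPolynomial (Fin m) ℚ, p.totalDegree ≤ 1 ∧
    ∀ x ∈ Λ, g x = evalR p x

/-- The tuple `f = (f_v)` induces the global function `g`. -/
def Induces {m : ℕ} (C : PolyComplex m) (f : (Fin m → ℝ) → ((Fin m → ℝ) → ℝ))
    (g : (Fin m → ℝ) → ℝ) : Prop :=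
  ∀ v ∈ C.vtx, ∀ Λ ∈ C.polys, v ∈ Λ → ∀ x ∈ Λ, g x = f v (x - v)

/-- `γ` is a bounded edge of the complex `C` with endpoints `v ≠ w`. -/
def IsBddEdge {m : ℕ} (C : PolyComplex m) (γ : Set (Fin m → ℝ)) (v w : Fin m → ℝ) : Prop :=
  γ ∈ C.polys ∧ v ≠ w ∧ v ∈ C.vtx ∧ w ∈ C.vtx ∧ γ = segment ℝ v w

/-- The condition that the tuple `(f_v)` lies in the kernel of the map `ρ`: for every
bounded edge `γ` with endpoints `v, w`, the pullbacks of `f_v` and `f_w` to the star of `γ`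
agree (affinely based at the respective vertices). -/
def KerRho {m : ℕ} (C : PolyComplex m)
    (f : (Fin m → ℝ) → ((Fin m → ℝ) → ℝ)) : Prop :=
  ∀ γ v w, IsBddEdge C γ v w → ∀ P ∈ C.polys, γ ⊆ P → ∀ x ∈ P, f v (x - v) = f w (x - w)

/-- `C'` refines (subdivides) `C`. -/
def Refines {m : ℕ} (C' C : PolyComplex m) : Prop :=
  ∀ P' ∈ C'.polys, ∃ P ∈ C.polys, P' ⊆ P

/-- The cone `c(P) ⊆ N_ℝ × ℝ_{≥0}` over a polyhedron `P ⊆ N_ℝ`. -/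
def cPoly {m : ℕ} (P : Set (Fin m → ℝ)) : Set (Fin (m + 1) → ℝ) :=
  closure { z | 0 < z (Fin.last m) ∧ (fun i : Fin m => z i.castSucc / z (Fin.last m)) ∈ P }

/-- A regular SCR polyhedral complex: the cone `c(P)` of every polyhedron is a regular cone. -/
def PolyComplex.IsRegular {m : ℕ} (C : PolyComplex m) : Prop :=
  ∀ P ∈ C.polys, ∃ (b : Module.Basis (Fin (m + 1)) ℤ (Fin (m + 1) → ℤ)) (s : Finset (Fin (m + 1))),
    cPoly P = coneOf (s.image fun j => ι (b j))

/-- The recession cone of a polyhedron. -/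
def recCone {m : ℕ} (P : Set (Fin m → ℝ)) : Set (Fin m → ℝ) :=
  {y | ∀ x ∈ P, ∀ c : ℝ, 0 ≤ c → x + c • y ∈ P}

/-- The recession fan (as a set of cones) of a polyhedral complex. -/
def recSet {m : ℕ} (C : PolyComplex m) : Set (Set (Fin m → ℝ)) :=
  {σ | ∃ P ∈ C.polys, σ = recCone P}

/-- Membership in `R(Σ)`: complete regular SCR polyhedral complexes with recession fan `Σ`. -/
def InRSigma {m : ℕ} (F : Fan m) (C : PolyComplex m) : Prop :=
  C.IsComplete ∧ C.IsRegular ∧ recSet C = F.cones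

/-- Homogeneous piecewise polynomial functions of degree `k` on the fan `c(Π)`. -/
def PPconeHom {m : ℕ} (C : PolyComplex m) (k : ℕ) (f : (Fin (m + 1) → ℝ) → ℝ) : Prop :=
  ∀ P ∈ C.polys, ∃ p : MvPolynomial (Fin (m + 1)) ℚ, p.IsHomogeneous k ∧
    ∀ z ∈ cPoly P, f z = evalR p z

/-- `PP^k_Σ(N_ℝ ⊕ ℝ_{≥0})`: functions that are piecewise polynomial of degree `k`
with respect to `c(Π)` for some `Π ∈ R(Σ)`. -/
def PPSigma {m : ℕ} (F : Fan m) (k : ℕ) (f : (Fin (m + 1) → ℝ) → ℝ) : Prop :=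
  ∃ C : PolyComplex m, InRSigma F C ∧ PPconeHom C k f

/-- The canonical piecewise-linear function attached to the ray through `v` (value `1` at
`v`, vanishing on cones not containing `v`). -/
def IsRayFunGen {m : ℕ} (F : Fan m) (v : Fin m → ℝ) (f : (Fin m → ℝ) → ℝ) : Prop :=
  IsPWLinear F f ∧ PPfun F f ∧ f v = 1 ∧
  ∀ σ ∈ F.cones, v ∉ σ → ∀ x ∈ σ, f x = 0

/-- A family `σ ↦ φ_σ` of canonical piecewise polynomial generators: `φ_σ` is the product
of the ray functions of the rays of the regular cone `σ`. -/
def IsCanonFamily {m : ℕ} (F : Fan m) (Φ : Set (Fin m → ℝ) → ((Fin m → ℝ) → ℝ)) : Prop :=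
  ∀ σ ∈ F.cones, ∃ (b : Module.Basis (Fin m) ℤ (Fin m → ℤ)) (s : Finset (Fin m))
    (rf : Fin m → ((Fin m → ℝ) → ℝ)),
      σ = coneOf (s.image fun j => ι (b j)) ∧
      (∀ j ∈ s, IsRayFunGen F (ι (b j)) (rf j)) ∧
      ∀ x, Φ σ x = ∏ j ∈ s, rf j x

/-- A maximal (full-dimensional) cone of a fan. -/
def IsMaxCone {m : ℕ} (F : Fan m) (σ : Set (Fin m → ℝ)) : Prop :=
  σ ∈ F.cones ∧ Submodule.span ℝ σ = ⊤

/-- `σ` is the minimal cone of `F` containing the set `S`. -/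
def IsMinConeOver {m : ℕ} (F : Fan m) (S σ : Set (Fin m → ℝ)) : Prop :=
  σ ∈ F.cones ∧ S ⊆ σ ∧ ∀ τ ∈ F.cones, S ⊆ τ → σ ⊆ τ

/-- The polynomial `p` represents the function `f` on the cone `σ`. -/
def Represents {m : ℕ} (f : (Fin m → ℝ) → ℝ) (σ : Set (Fin m → ℝ))
    (p : MvPolynomial (Fin m) ℚ) : Prop :=
  ∀ x ∈ σ, f x = evalR p x

/-- Maximal cones of `F'` whose image under `μ` has minimal containing cone `σ` in `F`. -/
def MaxOver {m : ℕ} (F' F : Fan m) (μ : (Fin m → ℝ) ≃ₗ[ℝ] (Fin m → ℝ))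
    (σ : Set (Fin m → ℝ)) : Set (Set (Fin m → ℝ)) :=
  {σ' | IsMaxCone F' σ' ∧ IsMinConeOver F (μ '' σ') σ}

/-- The operator `P` realizes the pushforward formula
`(π_* f)_σ = φ_σ · Σ_{μ(σ')=σ} φ_{σ'}^{-1} f_{σ'}` on maximal cones (with cleared
denominators, as an identity of the unique representing polynomials). -/
def PushFormula {m : ℕ} (F' F : Fan m) (μ : (Fin m → ℝ) ≃ₗ[ℝ] (Fin m → ℝ))
    (Φ' Φ : Set (Fin m → ℝ) → ((Fin m → ℝ) → ℝ))
    (P : ((Fin m → ℝ) → ℝ) → ((Fin m → ℝ) → ℝ)) : Prop :=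
  (∀ f, PPfun F' f → PPfun F (P f)) ∧
  ∀ f, PPfun F' f →
    ∀ q pΦ' : Set (Fin m → ℝ) → MvPolynomial (Fin m) ℚ,
      (∀ σ', IsMaxCone F' σ' → Represents f σ' (q σ') ∧ Represents (Φ' σ') σ' (pΦ' σ')) →
      ∀ σ, IsMaxCone F σ →
        ∀ r pσ : MvPolynomial (Fin m) ℚ, Represents (P f) σ r → Represents (Φ σ) σ pσ →
          ∀ y : Fin m → ℝ,
            evalR r y * ∏ᶠ σ' ∈ MaxOver F' F μ σ, evalR (pΦ' σ') (μ.symm y)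
              = evalR pσ y * ∑ᶠ σ' ∈ MaxOver F' F μ σ,
                  evalR (q σ') (μ.symm y) *
                    ∏ᶠ σ'' ∈ (MaxOver F' F μ σ) \ {σ'}, evalR (pΦ' σ'') (μ.symm y)

/-- The pullback of an affine piecewise polynomial tuple along a refinement `C' → C`. -/
def IsPullbackTuple {m : ℕ} (C C' : PolyComplex m) (k : ℕ)
    (f f' : (Fin m → ℝ) → ((Fin m → ℝ) → ℝ)) : Prop :=
  (∀ v' ∈ C'.vtx, v' ∈ C.vtx → ∀ y, InStar C' v' y → f' v' y = f v' y) ∧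
  (∀ v' ∈ C'.vtx, v' ∉ C.vtx → ∀ Λ ∈ C.polys, FullDim Λ → v' ∈ Λ →
    ∀ v ∈ C.vtx, v ∈ Λ → ∀ p : MvPolynomial (Fin m) ℚ, p.totalDegree ≤ k →
      (∀ y ∈ coneAt v Λ, f v y = evalR p y) →
      ∀ P' ∈ C'.polys, v' ∈ P' → P' ⊆ Λ → ∀ y ∈ coneAt v' P',
        f' v' y = evalR p ((y + v') - v))

/-- The piecewise linear function `φ_{v,γ}` attached at the vertex `v` to the edge `γ`
towards the vertex `w`: linear on the cones of `Π(v)`, vanishing on cones of polyhedra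
not containing `w`, normalized on the ray towards `w`. -/
def IsRayFunAt {m : ℕ} (C : PolyComplex m) (v w : Fin m → ℝ)
    (φ : (Fin m → ℝ) → ℝ) : Prop :=
  (∀ P ∈ C.polys, v ∈ P → ∃ ℓ : (Fin m → ℝ) →ₗ[ℝ] ℝ, ∀ y ∈ coneAt v P, φ y = ℓ y) ∧
  (∀ P ∈ C.polys, v ∈ P → w ∉ P → ∀ y ∈ coneAt v P, φ y = 0) ∧
  (∃ c : ℝ, 0 < c ∧ φ (c • (w - v)) = 1)

/-- `g = -γρ(f)`: the characterization of the composite map `-γρ` in terms of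
representing polynomials, following the explicit formula of the pushforward and pullback
maps: `(-γρ f)_v = Σ_γ (u_{v,γ*} u_{v_γ,γ}^* f_{v_γ} - φ_{v,γ} f_v)`. -/
def IsMinusGammaRho {m : ℕ} (C : PolyComplex m) (k : ℕ)
    (φ : (Fin m → ℝ) → (Fin m → ℝ) → ((Fin m → ℝ) → ℝ))
    (f g : (Fin m → ℝ) → ((Fin m → ℝ) → ℝ)) : Prop :=
  ∀ v ∈ C.vtx, ∀ P ∈ C.polys, FullDim P → v ∈ P →
    ∀ q : (Fin m → ℝ) → MvPolynomial (Fin m) ℚ,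
      (∀ u ∈ C.vtx, u ∈ P →
        (q u).totalDegree ≤ k ∧ ∀ y ∈ coneAt u P, f u y = evalR (q u) y) →
      ∀ y ∈ coneAt v P,
        g v y = ∑ᶠ w ∈ {w | w ∈ C.vtx ∧ w ≠ v ∧ segment ℝ v w ∈ C.polys ∧
                            segment ℝ v w ⊆ P},
          φ v w y * (evalR (q w) ((y + v) - w) - evalR (q v) y)

/-!
A tuple `f` is glued to the function `g x := f v (x - v)`, for any polyhedron `Λ ∋ x` with a
vertex `v`. The compatibility of the `f_v` on full-dimensional polyhedra reaches every
polyhedron because, by Baire's theorem near a relative interior point, each polyhedron of a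
complete complex is a face of a full-dimensional one, and two full-dimensional polyhedra meet
in a common face, which has a vertex (SCR). Conversely `f_v` extends the polynomial of `g` on
`P ∋ v` to the cone of `P` at `v`. Well-definedness and both uniqueness statements are the
identity theorem for polynomials: on a set with interior, or along a ray from an initial
segment. Polyhedra are closed, as continuity and Baire require, being slices of their
homogenizations, finitely generated cones, which are closed by Carathéodory's reduction.
-/

section Polynomial

open MvPolynomial

lemma _root_.MvPolynomial.totalDegree_bind₁_le {σ τ R : Type*} [CommSemiring R]
    (p : MvPolynomial σ R) {φ : σ → MvPolynomial τ R} (hφ : ∀ i, (φ i).totalDegree ≤ 1) :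
    (bind₁ φ p).totalDegree ≤ p.totalDegree := by
  rw [bind₁, aeval_def, eval₂]
  refine totalDegree_finsetSum_le fun d hd => ?_
  refine (totalDegree_mul _ _).trans ?_
  rw [algebraMap_eq, totalDegree_C, zero_add]
  refine (totalDegree_finsetProd _ _).trans <| (Finset.sum_le_sum fun i _ =>
    (totalDegree_pow _ _).trans (Nat.mul_le_mul_left _ (hφ i))).trans ?_
  simp only [mul_one]
  exact le_totalDegree hd

variable {n : ℕ}

lemma evalR_eq_aeval (p : MvPolynomial (Fin n) ℚ) (x : Fin n → ℝ) : evalR p x = aeval x p := by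
  rw [evalR, eval_map, aeval_def]

@[fun_prop]
lemma analyticAt_evalR (p : MvPolynomial (Fin n) ℚ) (x : Fin n → ℝ) :
    AnalyticAt ℝ (fun x => evalR p x) x :=
  AnalyticOnNhd.eval_mvPolynomial _ x trivial

lemma exists_evalR_eq_evalR_add (p : MvPolynomial (Fin n) ℚ) (v : Fin n → ℚ) :
    ∃ q : MvPolynomial (Fin n) ℚ, q.totalDegree ≤ p.totalDegree ∧
      ∀ x, evalR q x = evalR p (x + ιQ v) := by
  refine ⟨bind₁ (fun i => X i + C (v i)) p, totalDegree_bind₁_le p fun i => ?_, fun x => ?_⟩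
  · exact (totalDegree_add _ _).trans (by simp)
  · simp [evalR_eq_aeval, aeval_bind₁]
    rfl

end Polynomial

section Analytic

variable {E F : Type*} [NormedAddCommGroup E] [NormedSpace ℝ E] [NormedAddCommGroup F]
  [NormedSpace ℝ F]

lemma eq_of_eqOn_of_nonempty_interior {φ ψ : E → F} (hφ : AnalyticOnNhd ℝ φ Set.univ)
    (hψ : AnalyticOnNhd ℝ ψ Set.univ) {s : Set E} (hs : (interior s).Nonempty)
    (h : Set.EqOn φ ψ s) : φ = ψ := by
  obtain ⟨z, hz⟩ := hs
  exact hφ.eq_of_eventuallyEq hψ (Filter.eventually_of_mem (mem_interior_iff_mem_nhds.1 hz) h)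

end Analytic

section Cone

variable {n : ℕ} {P Q : Set (Fin n → ℝ)} {v x y : Fin n → ℝ}

lemma sub_mem_coneAt (hx : x ∈ P) : x - v ∈ coneAt v P :=
  ⟨1, zero_le_one, x, hx, (one_smul ℝ _).symm⟩

lemma exists_pos_forall_add_smul_mem (hP : Convex ℝ P) (hv : v ∈ P) (hy : y ∈ coneAt v P) :
    ∃ s : ℝ, 0 < s ∧ ∀ t ∈ Set.Icc 0 s, v + t • y ∈ P := by
  obtain ⟨c, hc, x, hx, rfl⟩ := hy
  refine ⟨(c + 1)⁻¹, by positivity, fun t ⟨ht₀, ht⟩ => ?_⟩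
  have htc : t * c ≤ 1 := by
    have := mul_le_mul_of_nonneg_right ht (by positivity : (0 : ℝ) ≤ c + 1)
    rw [inv_mul_cancel₀ (by positivity)] at this
    nlinarith
  rw [smul_smul]
  exact hP.add_smul_sub_mem hv hx ⟨by positivity, htc⟩

lemma coneAt_inter_subset (hP : Convex ℝ P) (hQ : Convex ℝ Q) (hvP : v ∈ P) (hvQ : v ∈ Q) :
    coneAt v P ∩ coneAt v Q ⊆ coneAt v (P ∩ Q) := by
  rintro y ⟨hyP, hyQ⟩
  obtain ⟨s, hs, hsP⟩ := exists_pos_forall_add_smul_mem hP hvP hyP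
  obtain ⟨s', hs', hsQ⟩ := exists_pos_forall_add_smul_mem hQ hvQ hyQ
  have hmem : min s s' ∈ Set.Icc 0 s ∧ min s s' ∈ Set.Icc 0 s' :=
    ⟨⟨by positivity, min_le_left _ _⟩, ⟨by positivity, min_le_right _ _⟩⟩
  refine ⟨(min s s')⁻¹, by positivity, _, ⟨hsP _ hmem.1, hsQ _ hmem.2⟩, ?_⟩
  rw [add_sub_cancel_left, smul_smul, inv_mul_cancel₀ (by positivity), one_smul]

lemma apply_add_eq_of_eqOn {φ ψ : (Fin n → ℝ) → ℝ} (hφ : AnalyticOnNhd ℝ φ Set.univ)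
    (hψ : AnalyticOnNhd ℝ ψ Set.univ) (hP : Convex ℝ P) (hv : v ∈ P) (hy : y ∈ coneAt v P)
    (h : Set.EqOn φ ψ P) : φ (v + y) = ψ (v + y) := by
  obtain ⟨s, hs, hsP⟩ := exists_pos_forall_add_smul_mem hP hv hy
  have hline : AnalyticOnNhd ℝ (fun t : ℝ => v + t • y) Set.univ := fun t _ => by fun_prop
  have := eq_of_eqOn_of_nonempty_interior (hφ.comp hline (Set.mapsTo_univ _ _))
    (hψ.comp hline (Set.mapsTo_univ _ _)) (s := Set.Icc 0 s) (by simpa using hs)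
    fun t ht => h (hsP t ht)
  simpa using congrFun this 1

end Cone

section NonnegSpan

variable {α E : Type*} [NormedAddCommGroup E] [NormedSpace ℝ E]

def nonnegSpan (s : Finset α) (G : α → E) : Set E :=
  {x | ∃ c : α → ℝ, (∀ a ∈ s, 0 ≤ c a) ∧ ∑ a ∈ s, c a • G a = x}

variable {s t : Finset α} {G : α → E} {x : E}

lemma nonnegSpan_mono [DecidableEq α] (hts : t ⊆ s) : nonnegSpan t G ⊆ nonnegSpan s G := by
  rintro _ ⟨c, hc, rfl⟩
  refine ⟨fun a => if a ∈ t then c a else 0, fun a _ => ?_, ?_⟩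
  · dsimp only
    split_ifs with ha
    exacts [hc a ha, le_rfl]
  · simp only [ite_smul, zero_smul, Finset.sum_ite_mem, Finset.inter_eq_right.2 hts]

lemma exists_mem_nonnegSpan_erase [DecidableEq α] {d : α → ℝ}
    (hd : ∑ a ∈ s, d a • G a = 0) (hpos : ∃ a ∈ s, 0 < d a) (hx : x ∈ nonnegSpan s G) :
    ∃ a ∈ s, x ∈ nonnegSpan (s.erase a) G := by
  obtain ⟨c, hc, rfl⟩ := hx
  obtain ⟨a₀, ha₀, hmin⟩ := Finset.exists_min_image (s.filter fun a => 0 < d a)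
    (fun a => c a / d a) (by simpa [Finset.Nonempty] using hpos)
  obtain ⟨ha₀s, hda₀⟩ := Finset.mem_filter.1 ha₀
  set τ := c a₀ / d a₀
  have hτ : 0 ≤ τ := div_nonneg (hc a₀ ha₀s) hda₀.le
  refine ⟨a₀, ha₀s, fun a => c a - τ * d a, fun a ha => ?_, ?_⟩
  · have has := Finset.mem_of_mem_erase ha
    rcases lt_or_ge 0 (d a) with hda | hda
    · have := hmin a (Finset.mem_filter.2 ⟨has, hda⟩)
      rw [div_le_div_iff₀ hda₀ hda] at this
      have : τ * d a ≤ c a := by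
        rw [div_mul_eq_mul_div, div_le_iff₀ hda₀]; linarith
      linarith
    · nlinarith [hc a has]
  · have hτa₀ : c a₀ - τ * d a₀ = 0 := by
      rw [div_mul_cancel₀ _ hda₀.ne', sub_self]
    rw [Finset.sum_erase s (f := fun a => (c a - τ * d a) • G a) (by simp [hτa₀])]
    simp only [sub_smul, Finset.sum_sub_distrib, mul_smul, ← Finset.smul_sum, hd, smul_zero,
      sub_zero]

lemma isClosed_nonnegSpan [FiniteDimensional ℝ E] (s : Finset α) (G : α → E) :
    IsClosed (nonnegSpan s G) := by
  classical
  induction s using Finset.strongInduction with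
  | H s ih =>
  by_cases hind : LinearIndepOn ℝ G (s : Set α)
  · let T := Fintype.linearCombination ℝ (fun a : s => G a)
    have hT : nonnegSpan s G = T '' Set.Ici 0 := by
      ext x
      constructor
      · rintro ⟨c, hc, rfl⟩
        refine ⟨fun a => c a, fun a => hc a a.2, ?_⟩
        simpa [T, Fintype.linearCombination_apply] using Finset.sum_attach s fun a => c a • G a
      · rintro ⟨c, hc, rfl⟩
        refine ⟨fun a => if h : a ∈ s then c ⟨a, h⟩ else 0, fun a ha => ?_, ?_⟩
        · simpa [ha] using hc ⟨a, ha⟩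
        · rw [← Finset.sum_coe_sort]
          simp [T, Fintype.linearCombination_apply]
    rw [hT]
    exact (LinearMap.isClosedEmbedding_of_injective
      (LinearMap.ker_eq_bot.2 hind.fintypeLinearCombination_injective)).isClosedMap _ isClosed_Ici
  · obtain ⟨f, g, hfg, a, ha, hne⟩ := not_linearIndepOn_finset_iffₛ.1 hind
    obtain ⟨d, hd, hpos⟩ : ∃ d : α → ℝ, ∑ a ∈ s, d a • G a = 0 ∧ ∃ a ∈ s, 0 < d a := by
      have hrel : ∀ d : α → ℝ, d = f - g ∨ d = g - f → ∑ a ∈ s, d a • G a = 0 := by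
        rintro d (rfl | rfl) <;> simp [sub_smul, Finset.sum_sub_distrib, hfg]
      rcases hne.lt_or_gt with h | h
      · exact ⟨g - f, hrel _ (Or.inr rfl), a, ha, sub_pos.2 h⟩
      · exact ⟨f - g, hrel _ (Or.inl rfl), a, ha, sub_pos.2 h⟩
    have hsplit : nonnegSpan s G = ⋃ a ∈ s, nonnegSpan (s.erase a) G := by
      refine subset_antisymm (fun x hx => ?_) (Set.iUnion₂_subset fun a _ =>
        nonnegSpan_mono (s.erase_subset a))
      obtain ⟨b, hb, hx⟩ := exists_mem_nonnegSpan_erase hd hpos hx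
      exact Set.mem_biUnion hb hx
    rw [hsplit]
    exact Set.Finite.isClosed_biUnion s.finite_toSet fun a ha => ih _ (Finset.erase_ssubset ha)

end NonnegSpan

section Polyhedron

variable {n : ℕ} {V R : Finset (Fin n → ℚ)}

lemma ιQ_mem_polyhedronOf [DecidableEq (Fin n → ℚ)] {p : Fin n → ℚ} (hp : p ∈ V) :
    ιQ p ∈ polyhedronOf V R :=
  ⟨fun q => if q = p then 1 else 0, 0, fun q => by positivity, by simp [hp], fun _ => le_rfl,
    by simp [hp]⟩

lemma convex_polyhedronOf : Convex ℝ (polyhedronOf V R) := by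
  rintro _ ⟨a, c, ha, hsum, hc, rfl⟩ _ ⟨a', c', ha', hsum', hc', rfl⟩ s t hs ht hst
  refine ⟨s • a + t • a', s • c + t • c',
    fun p => add_nonneg (mul_nonneg hs (ha p)) (mul_nonneg ht (ha' p)), ?_,
    fun v => add_nonneg (mul_nonneg hs (hc v)) (mul_nonneg ht (hc' v)), ?_⟩
  · simp [Finset.sum_add_distrib, ← Finset.mul_sum, hsum, hsum', hst]
  · simp only [Pi.add_apply, Pi.smul_apply, smul_eq_mul, add_smul, mul_smul, smul_add,
      Finset.sum_add_distrib, Finset.smul_sum]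
    abel

lemma polyhedronOf_eq_preimage_nonnegSpan :
    polyhedronOf V R = (fun x => (x, (1 : ℝ))) ⁻¹'
      nonnegSpan (V.disjSum R) (Sum.elim (fun p => (ιQ p, 1)) (fun r => (ιQ r, 0))) := by
  ext x
  simp only [polyhedronOf, nonnegSpan, Set.mem_ofPred_eq, Set.mem_preimage, Sum.forall,
    Finset.inl_mem_disjSum, Finset.inr_mem_disjSum, Finset.sum_disjSum, Sum.elim_inl,
    Sum.elim_inr, Prod.ext_iff, Prod.fst_add, Prod.snd_add, Prod.fst_sum, Prod.snd_sum,
    Prod.smul_fst, Prod.smul_snd, smul_eq_mul, mul_one, mul_zero, Finset.sum_const_zero, add_zero]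
  constructor
  · rintro ⟨a, c, ha, hsum, hc, rfl⟩
    exact ⟨Sum.elim a c, ⟨fun p _ => ha p, fun r _ => hc r⟩, rfl, hsum⟩
  · rintro ⟨e, ⟨heV, heR⟩, hx, hsum⟩
    refine ⟨fun p => max (e (.inl p)) 0, fun r => max (e (.inr r)) 0, fun _ => le_max_right _ _,
      ?_, fun _ => le_max_right _ _, ?_⟩
    · rw [← hsum]
      exact Finset.sum_congr rfl fun p hp => max_eq_left (heV p hp)
    · rw [← hx]
      congr 1 <;> exact Finset.sum_congr rfl fun p hp => by simp [heV, heR, hp]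

lemma isClosed_polyhedronOf : IsClosed (polyhedronOf V R) := by
  rw [polyhedronOf_eq_preimage_nonnegSpan]
  exact (isClosed_nonnegSpan _ _).preimage (by fun_prop)

end Polyhedron

section RelativeInterior

lemma exists_pos_add_smul_sub_mem_of_mem_intrinsicInterior {E : Type*} [NormedAddCommGroup E]
    [NormedSpace ℝ E] {s : Set E} {w z : E} (hw : w ∈ intrinsicInterior ℝ s) (hz : z ∈ s) :
    ∃ t : ℝ, 0 < t ∧ w + t • (w - z) ∈ s := by
  obtain ⟨y, hy, rfl⟩ := mem_intrinsicInterior.1 hw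
  have hys : y ∈ ((↑) : affineSpan ℝ s → E) ⁻¹' s := interior_subset hy
  have hline : ∀ t : ℝ, (y : E) + t • ((y : E) - z) ∈ affineSpan ℝ s := fun t => by
    rw [add_comm]
    exact AffineSubspace.vadd_mem_of_mem_direction (Submodule.smul_mem _ t (by
      rw [direction_affineSpan]
      exact vsub_mem_vectorSpan ℝ hys hz)) y.2
  let γ : ℝ → affineSpan ℝ s := fun t => ⟨_, hline t⟩
  have hγ : Continuous γ := by fun_prop
  have h0 : ∀ᶠ t in nhds 0, γ t ∈ interior ((↑) ⁻¹' s) :=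
    hγ.continuousAt.preimage_mem_nhds (by simpa [γ] using isOpen_interior.mem_nhds hy)
  obtain ⟨t, ht, htpos⟩ := ((h0.filter_mono nhdsWithin_le_nhds).and
    (self_mem_nhdsWithin : Set.Ioi (0 : ℝ) ∈ nhdsWithin 0 (Set.Ioi 0))).exists
  exact ⟨t, htpos, (interior_subset ht : γ t ∈ ((↑) : affineSpan ℝ s → E) ⁻¹' s)⟩

variable {n : ℕ}

lemma IsFaceOfPoly.eq_of_mem_intrinsicInterior {P Q : Set (Fin n → ℝ)} {w : Fin n → ℝ}
    (hQ : IsFaceOfPoly Q P) (hw : w ∈ intrinsicInterior ℝ P) (hwQ : w ∈ Q) : Q = P := by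
  obtain ⟨u, r, hge, rfl⟩ := hQ
  refine subset_antisymm (Set.sep_subset _ _) fun z hz => ⟨hz, ?_⟩
  obtain ⟨t, ht, hmem⟩ := exists_pos_add_smul_sub_mem_of_mem_intrinsicInterior hw hz
  have := hge _ hmem
  rw [map_add, map_smul, map_sub, hwQ.2, smul_eq_mul] at this
  nlinarith [hge z hz]

end RelativeInterior

namespace PolyComplex

variable {n : ℕ} (C : PolyComplex n) {P : Set (Fin n → ℝ)}

lemma convex_of_mem (hP : P ∈ C.polys) : Convex ℝ P := by
  obtain ⟨V, R, -, rfl⟩ := C.rat P hP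
  exact convex_polyhedronOf

lemma isClosed_of_mem (hP : P ∈ C.polys) : IsClosed P := by
  obtain ⟨V, R, -, rfl⟩ := C.rat P hP
  exact isClosed_polyhedronOf

lemma exists_eq_ιQ_of_mem_vtx {v : Fin n → ℝ} (hv : v ∈ C.vtx) : ∃ q, v = ιQ q := by
  classical
  obtain ⟨V, R, ⟨q, hq⟩, hV⟩ := C.rat {v} hv
  have := ιQ_mem_polyhedronOf (R := R) hq
  rw [← hV] at this
  exact ⟨q, this.symm⟩

variable {C}

lemma exists_fullDim_superset (hC : C.IsComplete) {Λ : Set (Fin n → ℝ)} (hΛ : Λ ∈ C.polys)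
    (hne : Λ.Nonempty) : ∃ P ∈ C.polys, FullDim P ∧ Λ ⊆ P := by
  obtain ⟨w, hw⟩ := hne.intrinsicInterior (C.convex_of_mem hΛ)
  let K := ⋃ P ∈ {P | P ∈ C.polys ∧ w ∉ P}, P
  have hK : IsClosed K := Set.Finite.isClosed_biUnion (C.finite.subset fun _ hP => hP.1)
    fun P hP => C.isClosed_of_mem hP.1
  have hdense := dense_sUnion_interior_of_closed (fun _ => C.isClosed_of_mem) C.finite.countable hC
  obtain ⟨y, hyK, hy⟩ := hdense.inter_open_nonempty _ hK.isOpen_compl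
    ⟨w, fun hwK => by
      obtain ⟨P, ⟨_, hwP⟩, hP⟩ := Set.mem_iUnion₂.1 hwK
      exact hwP hP⟩
  obtain ⟨P, hP, hyP⟩ := Set.mem_iUnion₂.1 hy
  have hwP : w ∈ P := by
    by_contra hwP
    exact hyK (Set.mem_biUnion ⟨hP, hwP⟩ (interior_subset hyP))
  have hwΛ := intrinsicInterior_subset hw
  refine ⟨P, hP, ⟨y, hyP⟩, Set.inter_eq_left.1 ?_⟩
  exact ((C.inter_face Λ hΛ P hP ⟨w, hwΛ, hwP⟩).1).eq_of_mem_intrinsicInterior hw ⟨hwΛ, hwP⟩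

lemma continuous_of_forall_mem_polys (hC : C.IsComplete) {g : (Fin n → ℝ) → ℝ}
    (hg : ∀ Λ ∈ C.polys, ∃ p : MvPolynomial (Fin n) ℚ, ∀ x ∈ Λ, g x = evalR p x) :
    Continuous g := by
  have : Finite C.polys := C.finite.to_subtype
  refine LocallyFinite.continuous (f := fun Λ : C.polys => (Λ : Set (Fin n → ℝ)))
    (locallyFinite_of_finite _) (by rwa [← Set.sUnion_eq_iUnion]) (fun Λ => C.isClosed_of_mem Λ.2)
    fun Λ => ?_
  obtain ⟨p, hp⟩ := hg Λ Λ.2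
  exact (MvPolynomial.continuous_eval _).continuousOn.congr hp

end PolyComplex

section PiecewisePolynomial

variable {n k : ℕ} {C : PolyComplex n} {f f' : (Fin n → ℝ) → (Fin n → ℝ) → ℝ}
  {g g' : (Fin n → ℝ) → ℝ} {v : Fin n → ℝ}

lemma AffinePP.apply_sub_eq_of_fullDim (hf : AffinePP C k f) {P : Set (Fin n → ℝ)}
    (hP : P ∈ C.polys) (hPd : FullDim P) {w x : Fin n → ℝ} (hv : v ∈ C.vtx) (hvP : v ∈ P)
    (hw : w ∈ C.vtx) (hwP : w ∈ P) (hx : x ∈ P) : f v (x - v) = f w (x - w) := by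
  obtain ⟨p, hpk, hp⟩ := hf.1 v hv P hP hvP
  obtain ⟨q, hqk, hq⟩ := hf.1 w hw P hP hwP
  rw [hp _ (sub_mem_coneAt hx), hq _ (sub_mem_coneAt hx)]
  exact hf.2 P hP hPd v hv hvP w hw hwP p q hpk hp hqk hq x

lemma AffinePP.apply_sub_eq (hf : AffinePP C k f) (hC : C.IsComplete)
    (hSCR : ∀ P ∈ C.polys, ∃ v ∈ C.vtx, v ∈ P) {Λ₁ Λ₂ : Set (Fin n → ℝ)} {v₁ v₂ x : Fin n → ℝ}
    (hΛ₁ : Λ₁ ∈ C.polys) (hv₁ : v₁ ∈ C.vtx) (hv₁Λ : v₁ ∈ Λ₁) (hx₁ : x ∈ Λ₁)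
    (hΛ₂ : Λ₂ ∈ C.polys) (hv₂ : v₂ ∈ C.vtx) (hv₂Λ : v₂ ∈ Λ₂) (hx₂ : x ∈ Λ₂) :
    f v₁ (x - v₁) = f v₂ (x - v₂) := by
  obtain ⟨P₁, hP₁, hP₁d, hΛP₁⟩ := PolyComplex.exists_fullDim_superset hC hΛ₁ ⟨x, hx₁⟩
  obtain ⟨P₂, hP₂, hP₂d, hΛP₂⟩ := PolyComplex.exists_fullDim_superset hC hΛ₂ ⟨x, hx₂⟩
  have hne : (P₁ ∩ P₂).Nonempty := ⟨x, hΛP₁ hx₁, hΛP₂ hx₂⟩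
  obtain ⟨u, hu, huP₁, huP₂⟩ :=
    hSCR _ (C.face_mem P₁ hP₁ _ (C.inter_face P₁ hP₁ P₂ hP₂ hne).1 hne)
  rw [hf.apply_sub_eq_of_fullDim hP₁ hP₁d hv₁ (hΛP₁ hv₁Λ) hu huP₁ (hΛP₁ hx₁),
    hf.apply_sub_eq_of_fullDim hP₂ hP₂d hu huP₂ hv₂ (hΛP₂ hv₂Λ) (hΛP₂ hx₂)]

lemma AffinePP.exists_induces (hf : AffinePP C k f) (hC : C.IsComplete)
    (hSCR : ∀ P ∈ C.polys, ∃ v ∈ C.vtx, v ∈ P) : ∃ g, Induces C f g := by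
  have hcover : ∀ x, ∃ Λ ∈ C.polys, ∃ v ∈ C.vtx, v ∈ Λ ∧ x ∈ Λ := fun x => by
    obtain ⟨Λ, hΛ, hx⟩ := Set.mem_sUnion.1 (hC ▸ Set.mem_univ x)
    obtain ⟨v, hv, hvΛ⟩ := hSCR Λ hΛ
    exact ⟨Λ, hΛ, v, hv, hvΛ, hx⟩
  choose Λ hΛ v hv hvΛ hxΛ using hcover
  exact ⟨fun x => f (v x) (x - v x), fun w hw P hP hwP x hx =>
    hf.apply_sub_eq hC hSCR (hΛ x) (hv x) (hvΛ x) (hxΛ x) hP hw hwP hx⟩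

lemma Induces.unique (hC : C.IsComplete) (hSCR : ∀ P ∈ C.polys, ∃ v ∈ C.vtx, v ∈ P)
    (hg : Induces C f g) (hg' : Induces C f g') : g = g' := by
  funext x
  obtain ⟨Λ, hΛ, hx⟩ := Set.mem_sUnion.1 (hC ▸ Set.mem_univ x)
  obtain ⟨v, hv, hvΛ⟩ := hSCR Λ hΛ
  rw [hg v hv Λ hΛ hvΛ x hx, hg' v hv Λ hΛ hvΛ x hx]

lemma Induces.exists_evalR_eq (hf : ∀ v ∈ C.vtx, StarPP C v k (f v)) (hg : Induces C f g)
    (hSCR : ∀ P ∈ C.polys, ∃ v ∈ C.vtx, v ∈ P) {Λ : Set (Fin n → ℝ)} (hΛ : Λ ∈ C.polys) :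
    ∃ p : MvPolynomial (Fin n) ℚ, p.totalDegree ≤ k ∧ ∀ x ∈ Λ, g x = evalR p x := by
  obtain ⟨v, hv, hvΛ⟩ := hSCR Λ hΛ
  obtain ⟨p, hpk, hp⟩ := hf v hv Λ hΛ hvΛ
  obtain ⟨q, rfl⟩ := C.exists_eq_ιQ_of_mem_vtx hv
  obtain ⟨p', hp'p, hp'⟩ := exists_evalR_eq_evalR_add p (-q)
  refine ⟨p', hp'p.trans hpk, fun x hx => ?_⟩
  rw [hg _ hv Λ hΛ hvΛ x hx, hp _ (sub_mem_coneAt hx), hp']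
  congr 1
  ext i
  simp [ιQ, sub_eq_add_neg]

lemma Induces.isPA (hf : ∀ v ∈ C.vtx, StarPP C v 1 (f v)) (hg : Induces C f g)
    (hC : C.IsComplete) (hSCR : ∀ P ∈ C.polys, ∃ v ∈ C.vtx, v ∈ P) : IsPA C g := by
  have hpoly := fun Λ (hΛ : Λ ∈ C.polys) => hg.exists_evalR_eq hf hSCR hΛ
  refine ⟨PolyComplex.continuous_of_forall_mem_polys hC fun Λ hΛ => ?_, hpoly⟩
  obtain ⟨p, -, hp⟩ := hpoly Λ hΛ
  exact ⟨p, hp⟩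

lemma evalR_add_eq_of_mem_coneAt {P Q : Set (Fin n → ℝ)} (hP : P ∈ C.polys) (hQ : Q ∈ C.polys)
    {y : Fin n → ℝ} (hvP : v ∈ P) (hvQ : v ∈ Q) (hyP : y ∈ coneAt v P) (hyQ : y ∈ coneAt v Q)
    {p q : MvPolynomial (Fin n) ℚ} (hp : ∀ x ∈ P, g x = evalR p x)
    (hq : ∀ x ∈ Q, g x = evalR q x) : evalR p (v + y) = evalR q (v + y) :=
  apply_add_eq_of_eqOn (fun _ _ => by fun_prop) (fun _ _ => by fun_prop)
    ((C.convex_of_mem hP).inter (C.convex_of_mem hQ)) ⟨hvP, hvQ⟩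
    (coneAt_inter_subset (C.convex_of_mem hP) (C.convex_of_mem hQ) hvP hvQ ⟨hyP, hyQ⟩)
    fun x hx => (hp x hx.1).symm.trans (hq x hx.2)

lemma exists_starPP_induces
    (hg : ∀ Λ ∈ C.polys, ∃ p : MvPolynomial (Fin n) ℚ, p.totalDegree ≤ k ∧
      ∀ x ∈ Λ, g x = evalR p x) :
    ∃ f, (∀ v ∈ C.vtx, StarPP C v k (f v)) ∧ Induces C f g := by
  classical
  choose! piece hpiecek hpiece using hg
  let f v y := if h : InStar C v y then evalR (piece h.choose) (v + y) else 0
  have hf : ∀ P ∈ C.polys, ∀ v ∈ P, ∀ y ∈ coneAt v P, f v y = evalR (piece P) (v + y) := by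
    intro P hP v hvP y hyP
    have h : InStar C v y := ⟨P, hP, hvP, hyP⟩
    obtain ⟨hP', hvP', hyP'⟩ := h.choose_spec
    simp only [f, dif_pos h]
    exact evalR_add_eq_of_mem_coneAt hP' hP hvP' hvP hyP' hyP (hpiece _ hP') (hpiece P hP)
  refine ⟨f, fun v hv P hP hvP => ?_, fun v hv Λ hΛ hvΛ x hx => ?_⟩
  · obtain ⟨q, rfl⟩ := C.exists_eq_ιQ_of_mem_vtx hv
    obtain ⟨p, hpk, hp⟩ := exists_evalR_eq_evalR_add (piece P) q
    exact ⟨p, hpk.trans (hpiecek P hP), fun y hy => by rw [hf P hP _ hvP y hy, hp, add_comm]⟩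
  · rw [hf Λ hΛ v hvΛ _ (sub_mem_coneAt hx), add_sub_cancel, hpiece Λ hΛ x hx]

lemma affinePP_of_induces (hf : ∀ v ∈ C.vtx, StarPP C v k (f v)) (hg : Induces C f g) :
    AffinePP C k f := by
  refine ⟨hf, fun Λ hΛ hΛd v hv hvΛ v' hv' hv'Λ p p' _ hp _ hp' => congrFun ?_⟩
  refine eq_of_eqOn_of_nonempty_interior (fun _ _ => by fun_prop) (fun _ _ => by fun_prop) hΛd
    fun x hx => ?_
  rw [← hp _ (sub_mem_coneAt hx), ← hp' _ (sub_mem_coneAt hx), ← hg v hv Λ hΛ hvΛ x hx,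
    hg v' hv' Λ hΛ hv'Λ x hx]

lemma eq_of_induces_of_inStar (hf : StarPP C v k (f v)) (hf' : StarPP C v k (f' v))
    (hg : Induces C f g) (hg' : Induces C f' g) (hv : v ∈ C.vtx) {y : Fin n → ℝ}
    (hy : InStar C v y) : f' v y = f v y := by
  obtain ⟨P, hP, hvP, hyP⟩ := hy
  obtain ⟨p, -, hp⟩ := hf P hP hvP
  obtain ⟨p', -, hp'⟩ := hf' P hP hvP
  have := apply_add_eq_of_eqOn (φ := fun x => evalR p' (x - v)) (ψ := fun x => evalR p (x - v))
    (fun _ _ => by fun_prop) (fun _ _ => by fun_prop) (C.convex_of_mem hP) hvP hyP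
    fun x hx => by
      dsimp only
      rw [← hp _ (sub_mem_coneAt hx), ← hp' _ (sub_mem_coneAt hx), ← hg v hv P hP hvP x hx,
        hg' v hv P hP hvP x hx]
  simpa [hp y hyP, hp' y hyP] using this

end PiecewisePolynomial

theorem stmt11_general {n : ℕ} (C : PolyComplex n) (hC : C.IsComplete)
    (hSCR : ∀ P ∈ C.polys, ∃ v ∈ C.vtx, v ∈ P) :
    (∀ f, AffinePP C 1 f → ∃! g : (Fin n → ℝ) → ℝ, IsPA C g ∧ Induces C f g) ∧
    (∀ g, IsPA C g → ∃ f, AffinePP C 1 f ∧ Induces C f g ∧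
      ∀ f', AffinePP C 1 f' → Induces C f' g →
        ∀ v ∈ C.vtx, ∀ y, InStar C v y → f' v y = f v y) := by
  refine ⟨fun f hf => ?_, fun g hg => ?_⟩
  · obtain ⟨g, hg⟩ := hf.exists_induces hC hSCR
    exact ⟨g, ⟨hg.isPA hf.1 hC hSCR, hg⟩, fun g' hg' => (hg.unique hC hSCR hg'.2).symm⟩
  · obtain ⟨f, hf, hfg⟩ := exists_starPP_induces hg.2
    exact ⟨f, affinePP_of_induces hf hfg, hfg, fun f' hf' hf'g v hv y hy =>
      eq_of_induces_of_inStar (hf v hv) (hf'.1 v hv) hfg hf'g hv hy⟩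

/-- A degree-one affine piecewise polynomial function on a complete regular
SCR polyhedral complex `Π` induces a unique continuous piecewise affine function on
`N_ℝ`, and conversely every piecewise affine function with respect to `Π` arises from a
degree-one affine piecewise polynomial function, unique on the stars of the vertices;
hence `PP^1(Π)` is identified with the space of piecewise affine functions on `Π`. -/
theorem stmt11 {n : ℕ} (C : PolyComplex n) (hC : C.IsComplete) (hreg : C.IsRegular)
    (hSCR : ∀ P ∈ C.polys, ∃ v ∈ C.vtx, v ∈ P) :
    (∀ f, AffinePP C 1 f → ∃! g : (Fin n → ℝ) → ℝ, IsPA C g ∧ Induces C f g) ∧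
    (∀ g, IsPA C g → ∃ f, AffinePP C 1 f ∧ Induces C f g ∧
      ∀ f', AffinePP C 1 f' → Induces C f' g →
        ∀ v ∈ C.vtx, ∀ y, InStar C v y → f' v y = f v y) :=
  stmt11_general C hC hSCR

end PPArakelov
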